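/- arXiv:2112.02271 — 5 statements merged into one kernel-verified Lean document; each statement's English description precedes it below -/
import Mathlib

section
/- Let λ>0, κ∈(0,1), A ≥ 0, B ≥ 0, and C ∈ ℝ. Define g(t) = −A·e^{−λt} + B·e^{−λκt} + C for t > 0. Then for all 0 < t₁ ≤ t₂, if g(t₁) ≥ 0 and g(t₂) ≥ 0, then g(t) ≥ 0 for every t ∈ [t₁, t₂]. -/
/-- The slack function `g(t) = -A·e^{-λt} + B·e^{-λκt} + C` (with
`A, B ≥ 0`, `λ > 0`, `κ ∈ (0,1)`) is quasiconcave on positive times: if it is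
nonnegative at two points `0 < t₁ ≤ t₂`, then it is nonnegative on all of `[t₁, t₂]`. -/
theorem stmt_3 (lam κ A B C : ℝ) (hlam : 0 < lam) (hκ : κ ∈ Set.Ioo (0 : ℝ) 1)
    (hA : 0 ≤ A) (hB : 0 ≤ B) (g : ℝ → ℝ)
    (hg : ∀ t, 0 < t → g t = -A * Real.exp (-lam * t) + B * Real.exp (-lam * κ * t) + C) :
    ∀ t₁ t₂ : ℝ, 0 < t₁ → t₁ ≤ t₂ → 0 ≤ g t₁ → 0 ≤ g t₂ →
      ∀ t ∈ Set.Icc t₁ t₂, 0 ≤ g t := by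
  obtain ⟨hκ0, hκ1⟩ := hκ
  intro t₁ t₂ ht₁ h12 hg1 hg2 t ht
  obtain ⟨htl, htr⟩ := ht
  have ht0 : 0 < t := lt_of_lt_of_le ht₁ htl
  have ht₂ : 0 < t₂ := lt_of_lt_of_le ht₁ h12
  have key : ∀ s : ℝ, Real.exp (-lam * κ * s) = (Real.exp (-lam * s)) ^ κ := by
    intro s
    rw [Real.rpow_def_of_pos (Real.exp_pos _), Real.log_exp]
    ring_nf
  have hu21 : Real.exp (-lam * t₂) ≤ Real.exp (-lam * t₁) :=
    Real.exp_le_exp.2 (by nlinarith)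
  have huI : Real.exp (-lam * t) ∈ Set.Icc (Real.exp (-lam * t₂)) (Real.exp (-lam * t₁)) :=
    ⟨Real.exp_le_exp.2 (by nlinarith), Real.exp_le_exp.2 (by nlinarith)⟩
  obtain ⟨a, b, ha, hb, hab, habu⟩ := (Convex.mem_Icc hu21).1 huI
  have hcon := (Real.concaveOn_rpow hκ0.le hκ1.le).2
    (Set.mem_Ici.2 (Real.exp_pos (-lam * t₂)).le) (Set.mem_Ici.2 (Real.exp_pos (-lam * t₁)).le)
    ha hb hab
  simp only [smul_eq_mul] at hcon
  rw [hg t ht0, key]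
  rw [hg t₁ ht₁, key] at hg1
  rw [hg t₂ ht₂, key] at hg2
  rw [← habu]
  have hCab : a * C + b * C = C := by rw [← add_mul, hab, one_mul]
  nlinarith [hCab, mul_nonneg hB (sub_nonneg.2 hcon), mul_nonneg ha hg2, mul_nonneg hb hg1]
end

section
/- Let λ>0, T>0, k∈(0,1), κ = 1−k, and c ≥ 2 a natural number. Let G, L : ℝ → ℝ with L nondecreasing, and let a_1 ≥ a_2 ≥ … ≥ a_c be real numbers with G(a_n) ≥ 0 and L(a_n) ≥ 0 for all n = 1,…,c. Define the piecewise constant plan x : (0,T] → ℝ by x(t) = a_n for t ∈ [κ^n T, κ^{n−1}T), n = 1,…,c−1, and x(t) = a_c for t ∈ (0, κ^{c−1}T). Suppose the recurrence relation G(a_n)·e^{−λτ(n+1)} ≤ L(a_{n+1})·(1 − e^{−λτ(n+1)}) holds for every n = 1,…,c−1, where τ(n+1) = k·κ^n·T. Then for every t ∈ [κ^{c−1}T, T), the incentive constraint G(x(t))·e^{−λt} ≤ ∫_{(1−k)t}^{t} L(x(s))·λ·e^{−λs} ds holds. -/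
/-!
Let `t` lie in the slot `[κ^(n+1) T, κ^n T)` and put `m = κ^(n+1) T`. The retaliation window
`[κ t, t]` meets only this slot and the next one, so the integral is
`L(a_{n+2}) (e^{-λκt} - e^{-λm}) + L(a_{n+1}) (e^{-λm} - e^{-λt})`. Lowering `L(a_{n+1})` to
`L(a_{n+2})` leaves `L(a_{n+2}) e^{-λt} (e^{λkt} - 1)`, and since the window length `k t` is at
least the length `k m` of the next slot, the recurrence multiplied by `e^{λ(km - t)}` bounds this
from below by `G(a_{n+1}) e^{-λt}`.
-/

open Real Set MeasureTheory intervalIntegral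

lemma exists_succ_le_lt_of_le_of_lt {α : Type*} [LinearOrder α] (b : ℕ → α) {t : α} {N : ℕ}
    (hN : b N ≤ t) (h0 : t < b 0) : ∃ n < N, b (n + 1) ≤ t ∧ t < b n := by
  classical
  have hex : ∃ m, b m ≤ t := ⟨N, hN⟩
  obtain ⟨n, hn⟩ : ∃ n, Nat.find hex = n + 1 :=
    Nat.exists_eq_add_one_of_ne_zero fun h => (Nat.find_spec hex).not_gt (h ▸ h0)
  refine ⟨n, ?_, hn ▸ Nat.find_spec hex, ?_⟩
  · have := Nat.find_min' hex hN
    omega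
  · exact not_le.mp (Nat.find_min hex (hn ▸ Nat.lt_succ_self n))

lemma integral_mul_exp_neg (lam A a b : ℝ) :
    ∫ s in a..b, A * lam * exp (-lam * s) = A * (exp (-lam * a) - exp (-lam * b)) := by
  have hderiv : ∀ s ∈ uIcc a b,
      HasDerivAt (fun u => -A * exp (-lam * u)) (A * lam * exp (-lam * s)) s := fun s _ =>
    (((hasDerivAt_id s).const_mul (-lam)).exp.const_mul (-A)).congr_deriv (by simp; ring)
  rw [integral_eq_sub_of_hasDerivAt hderiv ((by fun_prop : Continuous _).intervalIntegrable _ _)]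
  ring

variable {f : ℝ → ℝ} {lam A a b : ℝ}

lemma intervalIntegrable_mul_exp_neg_of_eqOn_Ioo (hab : a ≤ b)
    (hf : EqOn f (fun _ => A) (Ioo a b)) :
    IntervalIntegrable (fun s => f s * lam * exp (-lam * s)) volume a b := by
  refine IntervalIntegrable.congr_uIoo (f := fun s => A * lam * exp (-lam * s))
    ((by fun_prop : Continuous _).intervalIntegrable _ _) fun s hs => ?_
  rw [uIoo_of_le hab] at hs
  simp only [hf hs]

lemma integral_mul_exp_neg_of_eqOn_Ioo (hab : a ≤ b) (hf : EqOn f (fun _ => A) (Ioo a b)) :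
    ∫ s in a..b, f s * lam * exp (-lam * s) = A * (exp (-lam * a) - exp (-lam * b)) := by
  rw [← integral_mul_exp_neg lam A a b]
  exact integral_congr_Ioo_of_le hab fun s hs => by simp only [hf hs]

lemma integral_mul_exp_neg_of_two_steps {p m t B : ℝ} (hpm : p ≤ m) (hmt : m ≤ t)
    (hA : EqOn f (fun _ => A) (Ioo p m)) (hB : EqOn f (fun _ => B) (Ioo m t)) :
    ∫ s in p..t, f s * lam * exp (-lam * s)
      = A * (exp (-lam * p) - exp (-lam * m)) + B * (exp (-lam * m) - exp (-lam * t)) := by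
  rw [← integral_add_adjacent_intervals (intervalIntegrable_mul_exp_neg_of_eqOn_Ioo hpm hA)
    (intervalIntegrable_mul_exp_neg_of_eqOn_Ioo hmt hB), integral_mul_exp_neg_of_eqOn_Ioo hpm hA,
    integral_mul_exp_neg_of_eqOn_Ioo hmt hB]

lemma mul_exp_neg_le_two_step_of_recurrence {G A B p m t d : ℝ} (hA : 0 ≤ A) (hAB : A ≤ B)
    (hlam : 0 ≤ lam) (hmt : m ≤ t) (hd : d ≤ t - p)
    (hrec : G * exp (-lam * d) ≤ A * (1 - exp (-lam * d))) :
    G * exp (-lam * t)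
      ≤ A * (exp (-lam * p) - exp (-lam * m)) + B * (exp (-lam * m) - exp (-lam * t)) := by
  have hshift : exp (-lam * d) * exp (lam * d - lam * t) = exp (-lam * t) := by
    rw [← exp_add]; ring_nf
  have hpd : exp (lam * d - lam * t) ≤ exp (-lam * p) := exp_le_exp.mpr (by nlinarith)
  have hmt' : exp (-lam * t) ≤ exp (-lam * m) := exp_le_exp.mpr (by nlinarith)
  calc G * exp (-lam * t) = G * exp (-lam * d) * exp (lam * d - lam * t) := by
        rw [← hshift]; ring
    _ ≤ A * (1 - exp (-lam * d)) * exp (lam * d - lam * t) :=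
        mul_le_mul_of_nonneg_right hrec (exp_pos _).le
    _ = A * (exp (lam * d - lam * t) - exp (-lam * t)) := by rw [← hshift]; ring
    _ ≤ A * (exp (-lam * p) - exp (-lam * t)) := by gcongr
    _ ≤ A * (exp (-lam * p) - exp (-lam * m)) + B * (exp (-lam * m) - exp (-lam * t)) := by
        nlinarith

theorem stmt_4_general (lam T k : ℝ) (hlam : 0 < lam) (hT : 0 < T) (hk : k ∈ Set.Ioo (0 : ℝ) 1)
    (κ : ℝ) (hκ : κ = 1 - k) (c : ℕ)
    (G L : ℝ → ℝ) (hLmono : Monotone L)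
    (a : ℕ → ℝ)
    (hdecr : ∀ n, 1 ≤ n → n + 1 ≤ c → a (n + 1) ≤ a n)
    (hLpos : ∀ n, 1 ≤ n → n ≤ c → 0 ≤ L (a n))
    (x : ℝ → ℝ)
    (hx1 : ∀ n, 1 ≤ n → n ≤ c - 1 → ∀ t ∈ Set.Ico (κ ^ n * T) (κ ^ (n - 1) * T), x t = a n)
    (hx2 : ∀ t ∈ Set.Ioo (0 : ℝ) (κ ^ (c - 1) * T), x t = a c)
    (hrec : ∀ n, 1 ≤ n → n ≤ c - 1 →
      G (a n) * Real.exp (-lam * (k * κ ^ n * T))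
        ≤ L (a (n + 1)) * (1 - Real.exp (-lam * (k * κ ^ n * T)))) :
    ∀ t ∈ Set.Ico (κ ^ (c - 1) * T) T,
      G (x t) * Real.exp (-lam * t)
        ≤ ∫ s in ((1 - k) * t)..t, L (x s) * lam * Real.exp (-lam * s) := by
  obtain ⟨hk0, hk1⟩ := hk
  have hκ0 : 0 < κ := by linarith
  rintro t ⟨htc, htT⟩
  obtain ⟨n, hnc, hmt, htn⟩ :=
    exists_succ_le_lt_of_le_of_lt (fun i => κ ^ i * T) htc (by simpa using htT)
  set m := κ ^ (n + 1) * T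
  have hm : 0 < m := by positivity
  have hpm : κ * t < m := by simp only [m, pow_succ']; nlinarith
  have hcur : EqOn x (fun _ => a (n + 1)) (Icc m t) := fun s hs =>
    hx1 (n + 1) (by omega) (by omega) s ⟨hs.1, by simpa using hs.2.trans_lt htn⟩
  have hnext : EqOn x (fun _ => a (n + 2)) (Ioo (κ * t) m) := by
    intro s hs
    rcases (show n + 2 ≤ c - 1 ∨ n + 2 = c by omega) with hslot | rfl
    · refine hx1 (n + 2) (by omega) hslot s ⟨?_, hs.2⟩
      calc κ ^ (n + 2) * T = κ * m := by ring
        _ ≤ s := by nlinarith [hs.1]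
    · exact hx2 s ⟨by nlinarith [hs.1], by simpa using hs.2⟩
  rw [show x t = a (n + 1) from hcur ⟨hmt, le_rfl⟩, ← hκ,
    integral_mul_exp_neg_of_two_steps (f := fun s => L (x s)) hpm.le hmt
    (fun s hs => congrArg L (hnext hs)) (fun s hs => congrArg L (hcur (Ioo_subset_Icc_self hs)))]
  exact mul_exp_neg_le_two_step_of_recurrence (hLpos (n + 2) (by omega) (by omega))
    (hLmono (hdecr (n + 1) (by omega) (by omega))) hlam.le hmt
    (calc k * κ ^ (n + 1) * T = k * m := mul_assoc _ _ _
      _ ≤ k * t := by gcongr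
      _ = t - κ * t := by rw [hκ]; ring)
    (hrec (n + 1) (by omega) (by omega))

/-- (Sufficiency direction of Theorem 2.) If a nonincreasing action
sequence `a_1 ≥ … ≥ a_c` with `G(a_n) ≥ 0`, `L(a_n) ≥ 0` satisfies the recurrence
relation `G(a_n)·e^{-λτ(n+1)} ≤ L(a_{n+1})·(1 - e^{-λτ(n+1)})` where
`τ(n+1) = k·κ^n·T`, then the induced monotone piecewise constant plan satisfies the
SPE incentive constraint throughout the first `c-1` slots, i.e. on `[κ^{c-1}T, T)`. -/
theorem stmt_4 (lam T k : ℝ) (hlam : 0 < lam) (hT : 0 < T) (hk : k ∈ Set.Ioo (0 : ℝ) 1)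
    (κ : ℝ) (hκ : κ = 1 - k) (c : ℕ) (hc : 2 ≤ c)
    (G L : ℝ → ℝ) (hLmono : Monotone L)
    (a : ℕ → ℝ)
    (hdecr : ∀ n, 1 ≤ n → n + 1 ≤ c → a (n + 1) ≤ a n)
    (hGpos : ∀ n, 1 ≤ n → n ≤ c → 0 ≤ G (a n))
    (hLpos : ∀ n, 1 ≤ n → n ≤ c → 0 ≤ L (a n))
    (x : ℝ → ℝ)
    (hx1 : ∀ n, 1 ≤ n → n ≤ c - 1 → ∀ t ∈ Set.Ico (κ ^ n * T) (κ ^ (n - 1) * T), x t = a n)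
    (hx2 : ∀ t ∈ Set.Ioo (0 : ℝ) (κ ^ (c - 1) * T), x t = a c)
    (hrec : ∀ n, 1 ≤ n → n ≤ c - 1 →
      G (a n) * Real.exp (-lam * (k * κ ^ n * T))
        ≤ L (a (n + 1)) * (1 - Real.exp (-lam * (k * κ ^ n * T)))) :
    ∀ t ∈ Set.Ico (κ ^ (c - 1) * T) T,
      G (x t) * Real.exp (-lam * t)
        ≤ ∫ s in ((1 - k) * t)..t, L (x s) * lam * Real.exp (-lam * s) :=
  stmt_4_general lam T k hlam hT hk κ hκ c G L hLmono a hdecr hLpos x hx1 hx2 hrec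
end

section
/- Let λ>0 and τ>0, let a^N ∈ ℝ, and let G, L : ℝ → ℝ be such that G(a) ≥ 0 for all a, L(a^N) = 0, and L is strictly increasing. If real numbers a_n and a_{n+1} satisfy G(a_n)·e^{−λτ} ≤ L(a_{n+1})·(1 − e^{−λτ}), then a_{n+1} ≥ a^N. -/
/-- (Corollary 2.) If `G ≥ 0` everywhere, `L(a^N) = 0` and `L` is
strictly increasing, then the recurrence relation
`G(a_n)·e^{-λτ} ≤ L(a_{n+1})·(1 - e^{-λτ})` forces `a_{n+1} ≥ a^N`. -/
theorem stmt_5 (lam τ : ℝ) (hlam : 0 < lam) (hτ : 0 < τ) (aN : ℝ) (G L : ℝ → ℝ)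
    (hG : ∀ a, 0 ≤ G a) (hLN : L aN = 0) (hL : StrictMono L) (an an1 : ℝ)
    (h : G an * Real.exp (-lam * τ) ≤ L an1 * (1 - Real.exp (-lam * τ))) :
    aN ≤ an1 := by
  have he : Real.exp (-lam * τ) < 1 := by
    rw [Real.exp_lt_one_iff]
    nlinarith
  have h1 : 0 ≤ L an1 * (1 - Real.exp (-lam * τ)) :=
    le_trans (mul_nonneg (hG an) (Real.exp_pos _).le) h
  have h2 : 0 ≤ L an1 := by nlinarith
  exact hL.le_iff_le.mp (by linarith)
end

section
/- Let λ>0, let a^N < a^* be real numbers, and let G, L : ℝ → ℝ satisfy: G(a) ≥ 0 for all a ∈ [a^N, a^*], G(a) = 0 if and only if a = a^N (for a ∈ [a^N, a^*]), and L(a^N) = 0. Let c ≥ 2, let τ_2, …, τ_c > 0, and let a_1, …, a_c ∈ [a^N, a^*] satisfy the recurrence G(a_n)·e^{−λτ_{n+1}} ≤ L(a_{n+1})·(1 − e^{−λτ_{n+1}}) for every n = 1, …, c−1. If a_c = a^N, then a_n = a^N for every n = 1, …, c. -/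
/-- (Corollary 3.) With `G ≥ 0` on `[a^N, a^*]`, `G(a) = 0 ↔ a = a^N`
on `[a^N, a^*]`, and `L(a^N) = 0`, if actions `a_1, …, a_c ∈ [a^N, a^*]` satisfy the
recurrence relation and the terminal action is `a_c = a^N`, then every action of
the plan equals `a^N`. -/
theorem stmt_6 (lam : ℝ) (hlam : 0 < lam) (aN aStar : ℝ) (haa : aN < aStar)
    (G L : ℝ → ℝ)
    (hG0 : ∀ a ∈ Set.Icc aN aStar, 0 ≤ G a)
    (hGiff : ∀ a ∈ Set.Icc aN aStar, (G a = 0 ↔ a = aN))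
    (hLN : L aN = 0)
    (c : ℕ) (hc : 2 ≤ c) (τ : ℕ → ℝ) (hτ : ∀ n, 2 ≤ n → n ≤ c → 0 < τ n)
    (a : ℕ → ℝ) (ha : ∀ n, 1 ≤ n → n ≤ c → a n ∈ Set.Icc aN aStar)
    (hrec : ∀ n, 1 ≤ n → n ≤ c - 1 →
      G (a n) * Real.exp (-lam * τ (n + 1)) ≤ L (a (n + 1)) * (1 - Real.exp (-lam * τ (n + 1))))
    (hterm : a c = aN) :
    ∀ n, 1 ≤ n → n ≤ c → a n = aN := by
  have key : ∀ d, d ≤ c - 1 → a (c - d) = aN := by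
    intro d
    induction d with
    | zero => intro _; simpa using hterm
    | succ d ih =>
      intro hd
      have hnext : a (c - d) = aN := ih (Nat.le_of_succ_le hd)
      set n := c - (d + 1) with hn
      have hdc : d + 1 ≤ c - 1 := hd
      have hc1 : 1 ≤ c := le_trans (by norm_num) hc
      have hn1 : 1 ≤ n := by omega
      have hnc : n ≤ c - 1 := by omega
      have hsucc : n + 1 = c - d := by omega
      have hrecn := hrec n hn1 hnc
      rw [hsucc, hnext, hLN, zero_mul] at hrecn
      have hmem : a n ∈ Set.Icc aN aStar := ha n hn1 (by omega)
      have hGn : 0 ≤ G (a n) := hG0 _ hmem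
      have hexp : 0 < Real.exp (-lam * τ (c - d)) := Real.exp_pos _
      have : G (a n) = 0 := by
        nlinarith
      exact (hGiff _ hmem).mp this
  intro n h1 h2
  have : a (c - (c - n)) = aN := key (c - n) (by omega)
  rwa [Nat.sub_sub_self h2] at this
end

section
/- Let λ>0, T>0, k∈(0,1), κ = 1−k, let a^N ≤ a^* be reals, π^N ∈ ℝ, and let π, G : ℝ → ℝ, with L(a) := π(a) − π^N; assume π, G, and L are nondecreasing on [a^N, a^*]. Let x̄ be a bounded piecewise constant plan with x̄(t) = a_m ∈ [a^N, a^*] for t ∈ [κ^m T, κ^{m−1}T), satisfying the incentive constraint G(x̄(t))·e^{−λt} ≤ ∫_{(1−k)t}^{t} L(x̄(s))·λ·e^{−λs} ds for every t ∈ (0,T]. Suppose indices i < j satisfy a_m < a_j ≤ a_i for every m with i < m < j. Define x̂ by x̂(t) = a_j for t ∈ [κ^{j−1}T, κ^i T) and x̂(t) = x̄(t) otherwise. Then x̂ satisfies the incentive constraint for every t ∈ (0,T], and V(x̂,T) ≥ V(x̄,T), where V(x,T) := π(x(T))·e^{−λT} + ∫_0^T π(x(t))·λ·e^{−λt} dt.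 -/
/-!
Outside the raised stretch `[κ^(j-1) T, κ^i T)` the new plan is pointwise above the old one, so
every window integral of `L` and the payoff integral of `π` can only grow, while `G` is evaluated
at the unchanged action. Inside the stretch the whole window `[κ t, t)` lies in
`[κ^j T, κ^i T)`, where the new plan is the constant `a_j`, and the constraint reads
`G(a_j) ≤ L(a_j) (e^{λ k t} - 1)`. Its right side is monotone in `t`, so it suffices to check the
two ends: at `κ^(j-1) T` it is the left limit of the old constraint on slot `j`, and at `κ^i T` it
follows from the old constraint there, because `G(a_j) ≤ G(a_i)` and `L(a_{i+1}) ≤ L(a_j)`.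
-/

open MeasureTheory Set intervalIntegral

section

-- Not opened globally: the notation `π` would capture the payoff function of the theorem.
open Real

lemma integral_mul_exp_neg_mul (C lam c d : ℝ) :
    ∫ s in c..d, C * lam * exp (-lam * s) = C * (exp (-lam * c) - exp (-lam * d)) := by
  have hderiv (s : ℝ) :
      HasDerivAt (fun u => -C * exp (-lam * u)) (C * lam * exp (-lam * s)) s :=
    (((hasDerivAt_id' s).const_mul (-lam)).exp.const_mul (-C)).congr_deriv (by ring)
  rw [integral_eq_sub_of_hasDerivAt (fun s _ => hderiv s)
    ((by fun_prop : Continuous fun s => C * lam * exp (-lam * s)).intervalIntegrable c d)]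
  ring

lemma integral_eq_mul_sub_exp_neg_of_eqOn_Ico {f : ℝ → ℝ} {C lam c d : ℝ} (hcd : c ≤ d)
    (hf : EqOn f (fun s => C * lam * exp (-lam * s)) (Ico c d)) :
    ∫ s in c..d, f s = C * (exp (-lam * c) - exp (-lam * d)) := by
  rw [integral_congr_Ioo_of_le hcd (hf.mono Ioo_subset_Ico_self), integral_mul_exp_neg_mul]

lemma intervalIntegrable_of_eqOn_Ico {f g : ℝ → ℝ} {c d : ℝ} (hcd : c ≤ d) (hg : Continuous g)
    (hf : EqOn f g (Ico c d)) : IntervalIntegrable f volume c d :=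
  (hg.intervalIntegrable c d).congr_uIoo <| by
    rw [uIoo_of_le hcd]; exact (hf.mono Ioo_subset_Ico_self).symm

lemma intervalIntegrable_of_support_subset_Icc {f : ℝ → ℝ} {c d : ℝ} (hcd : c ≤ d)
    (hf : IntervalIntegrable f volume c d) (hsupp : Function.support f ⊆ Icc c d) (u v : ℝ) :
    IntervalIntegrable f volume u v :=
  ((integrableOn_iff_integrable_of_support_subset hsupp).mp
    ((intervalIntegrable_iff_integrableOn_Icc_of_le hcd).mp hf)).intervalIntegrable

/-- Neither integral need exist, but if one is the junk value `0` then so is the other. -/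
lemma integral_mono_of_intervalIntegrable_sub {f g : ℝ → ℝ} {c d : ℝ} (hcd : c ≤ d)
    (hle : ∀ s, f s ≤ g s) (hsub : IntervalIntegrable (fun s => g s - f s) volume c d) :
    ∫ s in c..d, f s ≤ ∫ s in c..d, g s := by
  by_cases hf : IntervalIntegrable f volume c d
  · have hg : IntervalIntegrable g volume c d := by simpa using hf.add hsub
    exact integral_mono_on hcd hf hg fun s _ => hle s
  · have hg : ¬ IntervalIntegrable g volume c d := fun hg => hf (by simpa using hg.sub hsub)
    rw [integral_undef hf, integral_undef hg]

lemma Antitone.exists_mem_Ico_succ {α : Type*} [LinearOrder α] {b : ℕ → α} (hb : Antitone b)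
    {p q : ℕ} {s : α} (hs : s ∈ Ico (b q) (b p)) :
    ∃ m, p ≤ m ∧ m < q ∧ s ∈ Ico (b (m + 1)) (b m) := by
  induction q with
  | zero => exact absurd (hb p.zero_le) (not_le.mpr (hs.2.trans_le' hs.1))
  | succ q ih =>
    by_cases hsq : s < b q
    · refine ⟨q, ?_, q.lt_succ_self, hs.1, hsq⟩
      by_contra! hqp
      exact absurd (hb hqp) (not_le.mpr (hs.2.trans_le' hs.1))
    · obtain ⟨m, hpm, hmq, hm⟩ := ih ⟨not_lt.mp hsq, hs.2⟩
      exact ⟨m, hpm, hmq.trans q.lt_succ_self, hm⟩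

lemma le_mul_of_le_mul_of_le_mul {h : ℝ → ℝ} (hh : Monotone h) {g c lo t hi : ℝ}
    (hlo : g ≤ c * h lo) (hhi : g ≤ c * h hi) (hlot : lo ≤ t) (hthi : t ≤ hi) : g ≤ c * h t := by
  rcases le_total 0 c with hc | hc
  · exact hlo.trans (mul_le_mul_of_nonneg_left (hh hlot) hc)
  · exact hhi.trans (mul_le_mul_of_nonpos_left (hh hthi) hc)

lemma mul_exp_neg_le_mul_sub_iff {lam κ g l t : ℝ} :
    g * exp (-lam * t) ≤ l * (exp (-lam * (κ * t)) - exp (-lam * t))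
      ↔ g ≤ l * (exp (lam * (1 - κ) * t) - 1) := by
  have hsplit : l * (exp (-lam * (κ * t)) - exp (-lam * t))
      = l * (exp (lam * (1 - κ) * t) - 1) * exp (-lam * t) := by
    rw [show -lam * (κ * t) = lam * (1 - κ) * t + -lam * t by ring, exp_add]
    ring
  rw [hsplit, mul_le_mul_iff_left₀ (exp_pos _)]

lemma mul_exp_neg_le_mul_sub_of_endpoints {lam κ g l lo t hi : ℝ} (hlam : 0 ≤ lam) (hκ : κ ≤ 1)
    (hlo : g * exp (-lam * lo) ≤ l * (exp (-lam * (κ * lo)) - exp (-lam * lo)))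
    (hhi : g * exp (-lam * hi) ≤ l * (exp (-lam * (κ * hi)) - exp (-lam * hi)))
    (hlot : lo ≤ t) (hthi : t ≤ hi) :
    g * exp (-lam * t) ≤ l * (exp (-lam * (κ * t)) - exp (-lam * t)) := by
  rw [mul_exp_neg_le_mul_sub_iff] at hlo hhi ⊢
  have hrate : 0 ≤ lam * (1 - κ) := mul_nonneg hlam (sub_nonneg.mpr hκ)
  have hmono : Monotone fun t => exp (lam * (1 - κ) * t) - 1 := fun u v huv => by
    simp only
    gcongr
  exact le_mul_of_le_mul_of_le_mul hmono hlo hhi hlot hthi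

/-- The window at `u` straddles `κ τ`; its part below `κ τ` vanishes as `u → τ⁻`. -/
lemma le_mul_sub_exp_neg_of_forall_mem_Ico {f : ℝ → ℝ} {lam κ τ g l l' : ℝ} (hκ0 : 0 ≤ κ)
    (hκ1 : κ < 1) (hτ : 0 < τ)
    (hf : EqOn f (fun s => l * lam * exp (-lam * s)) (Ico (κ * τ) τ))
    (hf' : EqOn f (fun s => l' * lam * exp (-lam * s)) (Ico (κ * (κ * τ)) (κ * τ)))
    (hIC : ∀ u ∈ Ico (κ * τ) τ, g * exp (-lam * u) ≤ ∫ s in κ * u..u, f s) :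
    g * exp (-lam * τ) ≤ l * (exp (-lam * (κ * τ)) - exp (-lam * τ)) := by
  have hκτ : κ * τ < τ := mul_lt_of_lt_one_left hτ hκ1
  have hwindow : ∀ u ∈ Ico (κ * τ) τ, g * exp (-lam * u)
      ≤ l' * (exp (-lam * (κ * u)) - exp (-lam * (κ * τ)))
        + l * (exp (-lam * (κ * τ)) - exp (-lam * u)) := by
    intro u hu
    have hlow : κ * (κ * τ) ≤ κ * u := mul_le_mul_of_nonneg_left hu.1 hκ0
    have hmid : κ * u ≤ κ * τ := mul_le_mul_of_nonneg_left hu.2.le hκ0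
    have hf₁ := hf'.mono (Ico_subset_Ico_left hlow)
    have hf₂ := hf.mono (Ico_subset_Ico_right hu.2.le)
    have h := hIC u hu
    rwa [← integral_add_adjacent_intervals
      (intervalIntegrable_of_eqOn_Ico hmid (by fun_prop) hf₁)
      (intervalIntegrable_of_eqOn_Ico hu.1 (by fun_prop) hf₂),
      integral_eq_mul_sub_exp_neg_of_eqOn_Ico hmid hf₁,
      integral_eq_mul_sub_exp_neg_of_eqOn_Ico hu.1 hf₂] at h
  have hτ_mem : τ ∈ closure (Ico (κ * τ) τ) := by
    rw [closure_Ico hκτ.ne]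
    exact right_mem_Icc.mpr hκτ.le
  simpa using (Continuous.continuousWithinAt (by fun_prop)).closure_le hτ_mem
    (Continuous.continuousWithinAt (by fun_prop)) hwindow

lemma antitone_pow_mul {κ T : ℝ} (hκ0 : 0 ≤ κ) (hκ1 : κ ≤ 1) (hT : 0 ≤ T) :
    Antitone fun m : ℕ => κ ^ m * T :=
  fun _ _ hpq => mul_le_mul_of_nonneg_right (pow_le_pow_of_le_one hκ0 hκ1 hpq) hT

lemma pow_mul_le_self {κ T : ℝ} (hκ0 : 0 ≤ κ) (hκ1 : κ ≤ 1) (hT : 0 ≤ T) (n : ℕ) :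
    κ ^ n * T ≤ T := by
  simpa using antitone_pow_mul hκ0 hκ1 hT n.zero_le

lemma pow_succ_mul_lt {κ T : ℝ} (hκ0 : 0 < κ) (hκ1 : κ < 1) (hT : 0 < T) (n : ℕ) :
    κ ^ (n + 1) * T < κ ^ n * T :=
  mul_lt_mul_of_pos_right (pow_lt_pow_right_of_lt_one₀ hκ0 hκ1 n.lt_succ_self) hT

section Plan

variable {lam κ T : ℝ} {G L x : ℝ → ℝ} {a : ℕ → ℝ}

lemma ic_at_slot_top (hκ0 : 0 < κ) (hκ1 : κ < 1) (hT : 0 < T)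
    (hx : ∀ m, ∀ t ∈ Ico (κ ^ (m + 1) * T) (κ ^ m * T), x t = a (m + 1))
    (hIC : ∀ t ∈ Ioc 0 T,
      G (x t) * exp (-lam * t) ≤ ∫ s in κ * t..t, L (x s) * lam * exp (-lam * s)) (n : ℕ) :
    G (a (n + 1)) * exp (-lam * (κ ^ n * T))
      ≤ L (a (n + 1)) * (exp (-lam * (κ * (κ ^ n * T))) - exp (-lam * (κ ^ n * T))) := by
  have hsucc (m : ℕ) : κ * (κ ^ m * T) = κ ^ (m + 1) * T := by ring
  have hslot (m : ℕ) := hsucc m ▸ hx m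
  refine le_mul_sub_exp_neg_of_forall_mem_Ico (f := fun s => L (x s) * lam * exp (-lam * s))
    (l' := L (a (n + 1 + 1)))
    hκ0.le hκ1 (by positivity) (fun s hs => by simp only [hslot n s hs])
    (fun s hs => by rw [hsucc, hsucc] at hs; simp only [hx (n + 1) s hs]) fun u hu => ?_
  have hu₀ : 0 < u := lt_of_lt_of_le (by positivity) hu.1
  simpa only [hslot n u hu] using
    hIC u ⟨hu₀, hu.2.le.trans (pow_mul_le_self hκ0.le hκ1.le hT.le n)⟩

lemma ic_at_slot_bottom (hκ0 : 0 < κ) (hκ1 : κ < 1) (hT : 0 < T)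
    (hx : ∀ m, ∀ t ∈ Ico (κ ^ (m + 1) * T) (κ ^ m * T), x t = a (m + 1))
    (hIC : ∀ t ∈ Ioc 0 T,
      G (x t) * exp (-lam * t) ≤ ∫ s in κ * t..t, L (x s) * lam * exp (-lam * s)) (n : ℕ) :
    G (a (n + 1)) * exp (-lam * (κ ^ (n + 1) * T))
      ≤ L (a (n + 2))
        * (exp (-lam * (κ * (κ ^ (n + 1) * T))) - exp (-lam * (κ ^ (n + 1) * T))) := by
  have hsucc : κ * (κ ^ (n + 1) * T) = κ ^ (n + 2) * T := by ring
  have h := hIC _ ⟨by positivity, pow_mul_le_self hκ0.le hκ1.le hT.le (n + 1)⟩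
  rwa [hx n _ ⟨le_rfl, pow_succ_mul_lt hκ0 hκ1 hT n⟩,
    integral_eq_mul_sub_exp_neg_of_eqOn_Ico (C := L (a (n + 2))) (lam := lam)
      (by rw [hsucc]; exact (pow_succ_mul_lt hκ0 hκ1 hT (n + 1)).le)
      fun s hs => by rw [hsucc] at hs; simp only [hx (n + 1) s hs]] at h

variable {xhat : ℝ → ℝ} {i j : ℕ}

lemma raise_eq_of_mem_Ico (hij : i < j)
    (hx : ∀ m, ∀ t ∈ Ico (κ ^ (m + 1) * T) (κ ^ m * T), x t = a (m + 1))
    (hxhat : ∀ t, xhat t = if t ∈ Ico (κ ^ (j - 1) * T) (κ ^ i * T) then a j else x t)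
    {s : ℝ} (hs : s ∈ Ico (κ ^ j * T) (κ ^ i * T)) : xhat s = a j := by
  obtain ⟨n, rfl⟩ : ∃ n, j = n + 1 := ⟨j - 1, by omega⟩
  rw [hxhat s, add_tsub_cancel_right]
  split_ifs with hR
  · rfl
  · exact hx n s ⟨hs.1, not_le.mp fun h => hR ⟨h, hs.2⟩⟩

lemma comp_le_comp_raise {φ : ℝ → ℝ} {S : Set ℝ} (hκ0 : 0 ≤ κ) (hκ1 : κ ≤ 1) (hT : 0 ≤ T)
    (hφ : MonotoneOn φ S) (ha : ∀ m, 1 ≤ m → a m ∈ S) (hmid : ∀ m, i < m → m < j → a m < a j)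
    (hx : ∀ m, ∀ t ∈ Ico (κ ^ (m + 1) * T) (κ ^ m * T), x t = a (m + 1))
    (hxhat : ∀ t, xhat t = if t ∈ Ico (κ ^ (j - 1) * T) (κ ^ i * T) then a j else x t)
    (s : ℝ) : φ (x s) ≤ φ (xhat s) := by
  rw [hxhat s]
  split_ifs with hR
  · obtain ⟨m, him, hmj, hm⟩ := (antitone_pow_mul hκ0 hκ1 hT).exists_mem_Ico_succ hR
    rw [hx m s hm]
    exact hφ (ha _ m.succ_pos) (ha j (by omega)) (hmid (m + 1) (by omega) (by omega)).le
  · exact le_rfl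

lemma intervalIntegrable_raise_sub (hκ0 : 0 ≤ κ) (hκ1 : κ ≤ 1) (hT : 0 ≤ T) (hij : i < j)
    (hx : ∀ m, ∀ t ∈ Ico (κ ^ (m + 1) * T) (κ ^ m * T), x t = a (m + 1))
    (hxhat : ∀ t, xhat t = if t ∈ Ico (κ ^ (j - 1) * T) (κ ^ i * T) then a j else x t)
    (φ : ℝ → ℝ) (u v : ℝ) :
    IntervalIntegrable (fun s => φ (xhat s) * lam * exp (-lam * s)
      - φ (x s) * lam * exp (-lam * s)) volume u v := by
  have hanti := antitone_pow_mul hκ0 hκ1 hT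
  have hcd : κ ^ (j - 1) * T ≤ κ ^ i * T := hanti (by omega)
  have hhat : IntervalIntegrable (fun s => φ (xhat s) * lam * exp (-lam * s)) volume
      (κ ^ (j - 1) * T) (κ ^ i * T) :=
    intervalIntegrable_of_eqOn_Ico hcd (g := fun s => φ (a j) * lam * exp (-lam * s))
      (by fun_prop) fun s hs => by simp only [hxhat s, if_pos hs]
  have hbar : IntervalIntegrable (fun s => φ (x s) * lam * exp (-lam * s)) volume
      (κ ^ (j - 1) * T) (κ ^ i * T) := by
    refine (IntervalIntegrable.trans_iterate_Ico (a := fun m => κ ^ m * T)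
      (by omega : i ≤ j - 1) fun m _ => ?_).symm
    exact (intervalIntegrable_of_eqOn_Ico (hanti m.le_succ)
      (g := fun s => φ (a (m + 1)) * lam * exp (-lam * s)) (by fun_prop)
      fun s hs => by simp only [hx m s hs]).symm
  refine intervalIntegrable_of_support_subset_Icc hcd (hhat.sub hbar) (fun s hs => ?_) u v
  by_contra hsR
  rw [Function.mem_support, hxhat s, if_neg fun h => hsR (Ico_subset_Icc_self h)] at hs
  exact hs (sub_self _)

lemma integral_le_integral_raise {φ : ℝ → ℝ} {S : Set ℝ} {c d : ℝ} (hlam : 0 ≤ lam)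
    (hκ0 : 0 ≤ κ) (hκ1 : κ ≤ 1) (hT : 0 ≤ T) (hij : i < j)
    (hφ : MonotoneOn φ S) (ha : ∀ m, 1 ≤ m → a m ∈ S) (hmid : ∀ m, i < m → m < j → a m < a j)
    (hx : ∀ m, ∀ t ∈ Ico (κ ^ (m + 1) * T) (κ ^ m * T), x t = a (m + 1))
    (hxhat : ∀ t, xhat t = if t ∈ Ico (κ ^ (j - 1) * T) (κ ^ i * T) then a j else x t)
    (hcd : c ≤ d) :
    ∫ s in c..d, φ (x s) * lam * exp (-lam * s)
      ≤ ∫ s in c..d, φ (xhat s) * lam * exp (-lam * s) :=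
  integral_mono_of_intervalIntegrable_sub hcd
    (fun s => by
      have := comp_le_comp_raise hκ0 hκ1 hT hφ ha hmid hx hxhat s
      gcongr)
    (intervalIntegrable_raise_sub hκ0 hκ1 hT hij hx hxhat φ c d)

lemma ic_raise_of_mem {S : Set ℝ} (hlam : 0 ≤ lam) (hκ0 : 0 < κ) (hκ1 : κ < 1) (hT : 0 < T)
    (hi : 1 ≤ i) (hij : i < j) (hG : MonotoneOn G S) (hL : MonotoneOn L S)
    (ha : ∀ m, 1 ≤ m → a m ∈ S) (hmid : ∀ m, i < m → m < j → a m < a j) (hji : a j ≤ a i)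
    (hx : ∀ m, ∀ t ∈ Ico (κ ^ (m + 1) * T) (κ ^ m * T), x t = a (m + 1))
    (hIC : ∀ t ∈ Ioc 0 T,
      G (x t) * exp (-lam * t) ≤ ∫ s in κ * t..t, L (x s) * lam * exp (-lam * s))
    (hxhat : ∀ t, xhat t = if t ∈ Ico (κ ^ (j - 1) * T) (κ ^ i * T) then a j else x t)
    {t : ℝ} (ht : t ∈ Ico (κ ^ (j - 1) * T) (κ ^ i * T)) :
    G (xhat t) * exp (-lam * t) ≤ ∫ s in κ * t..t, L (xhat s) * lam * exp (-lam * s) := by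
  obtain ⟨n, rfl⟩ : ∃ n, j = n + 1 := ⟨j - 1, by omega⟩
  obtain ⟨p, rfl⟩ : ∃ p, i = p + 1 := ⟨i - 1, by omega⟩
  rw [add_tsub_cancel_right] at ht
  have hκt : κ * t ≤ t := mul_le_of_le_one_left (ht.1.trans' (by positivity)) hκ1.le
  have hwindow : ∫ s in κ * t..t, L (xhat s) * lam * exp (-lam * s)
      = L (a (n + 1)) * (exp (-lam * (κ * t)) - exp (-lam * t)) := by
    refine integral_eq_mul_sub_exp_neg_of_eqOn_Ico hκt fun s hs => ?_
    have hs' : s ∈ Ico (κ ^ (n + 1) * T) (κ ^ (p + 1) * T) := by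
      refine ⟨le_trans ?_ hs.1, hs.2.trans ht.2⟩
      rw [pow_succ', mul_assoc]
      exact mul_le_mul_of_nonneg_left ht.1 hκ0.le
    simp only [raise_eq_of_mem_Ico hij hx hxhat hs']
  have hS (m : ℕ) : a (m + 1) ∈ S := ha _ m.succ_pos
  have hupper : G (a (n + 1)) * exp (-lam * (κ ^ (p + 1) * T))
      ≤ L (a (n + 1))
        * (exp (-lam * (κ * (κ ^ (p + 1) * T))) - exp (-lam * (κ ^ (p + 1) * T))) := by
    have hLij : L (a (p + 2)) ≤ L (a (n + 1)) := by
      rcases (show p + 2 ≤ n + 1 by omega).eq_or_lt with heq | hlt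
      · rw [heq]
      · exact hL (hS (p + 1)) (hS n) (hmid (p + 2) (by omega) hlt).le
    have hgap : 0 ≤ exp (-lam * (κ * (κ ^ (p + 1) * T))) - exp (-lam * (κ ^ (p + 1) * T)) := by
      have : κ * (κ ^ (p + 1) * T) ≤ κ ^ (p + 1) * T :=
        mul_le_of_le_one_left (by positivity) hκ1.le
      rw [sub_nonneg, exp_le_exp]
      exact mul_le_mul_of_nonpos_left this (neg_nonpos.mpr hlam)
    calc G (a (n + 1)) * exp (-lam * (κ ^ (p + 1) * T))
        ≤ G (a (p + 1)) * exp (-lam * (κ ^ (p + 1) * T)) := by gcongr; exact hG (hS n) (hS p) hji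
      _ ≤ _ := ic_at_slot_bottom hκ0 hκ1 hT hx hIC p
      _ ≤ _ := by gcongr
  rw [hxhat t, if_pos (by rwa [add_tsub_cancel_right]), hwindow]
  exact mul_exp_neg_le_mul_sub_of_endpoints hlam hκ1.le
    (ic_at_slot_top hκ0 hκ1 hT hx hIC n) hupper ht.1 ht.2.le

end Plan

end

theorem stmt_8_general (lam T k : ℝ) (hlam : 0 < lam) (hT : 0 < T) (hk : k ∈ Set.Ioo (0 : ℝ) 1)
    (κ : ℝ) (hκ : κ = 1 - k) (aN aStar : ℝ)
    (π G L : ℝ → ℝ)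
    (hπ : MonotoneOn π (Set.Icc aN aStar)) (hG : MonotoneOn G (Set.Icc aN aStar))
    (hLmono : MonotoneOn L (Set.Icc aN aStar))
    (a : ℕ → ℝ) (ha : ∀ m, 1 ≤ m → a m ∈ Set.Icc aN aStar)
    (xbar : ℝ → ℝ)
    (hxbar : ∀ m, 1 ≤ m → ∀ t ∈ Set.Ico (κ ^ m * T) (κ ^ (m - 1) * T), xbar t = a m)
    (hIC : ∀ t ∈ Set.Ioc (0 : ℝ) T,
      G (xbar t) * Real.exp (-lam * t)
        ≤ ∫ s in ((1 - k) * t)..t, L (xbar s) * lam * Real.exp (-lam * s))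
    (i j : ℕ) (hi : 1 ≤ i) (hij : i < j)
    (hmid : ∀ m, i < m → m < j → a m < a j) (hji : a j ≤ a i)
    (xhat : ℝ → ℝ)
    (hxhat : ∀ t, xhat t = if t ∈ Set.Ico (κ ^ (j - 1) * T) (κ ^ i * T) then a j else xbar t) :
    (∀ t ∈ Set.Ioc (0 : ℝ) T,
      G (xhat t) * Real.exp (-lam * t)
        ≤ ∫ s in ((1 - k) * t)..t, L (xhat s) * lam * Real.exp (-lam * s))
    ∧ π (xbar T) * Real.exp (-lam * T)
        + (∫ t in (0 : ℝ)..T, π (xbar t) * lam * Real.exp (-lam * t))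
      ≤ π (xhat T) * Real.exp (-lam * T)
        + ∫ t in (0 : ℝ)..T, π (xhat t) * lam * Real.exp (-lam * t) := by
  obtain ⟨hk0, hk1⟩ := hk
  have hκ0 : 0 < κ := by linarith
  have hκ1 : κ < 1 := by linarith
  rw [← hκ] at hIC ⊢
  have hx : ∀ m, ∀ t ∈ Ico (κ ^ (m + 1) * T) (κ ^ m * T), xbar t = a (m + 1) :=
    fun m t ht => hxbar (m + 1) m.succ_pos t (by simpa using ht)
  refine ⟨fun t ht => ?_, ?_⟩
  · by_cases hR : t ∈ Ico (κ ^ (j - 1) * T) (κ ^ i * T)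
    · exact ic_raise_of_mem hlam.le hκ0 hκ1 hT hi hij hG hLmono ha hmid hji hx hIC hxhat hR
    · rw [hxhat t, if_neg hR]
      exact (hIC t ht).trans <| integral_le_integral_raise hlam.le hκ0.le hκ1.le hT.le hij
        hLmono ha hmid hx hxhat (mul_le_of_le_one_left ht.1.le hκ1.le)
  · have hT_notin : T ∉ Ico (κ ^ (j - 1) * T) (κ ^ i * T) := fun h =>
      h.2.not_ge (pow_mul_le_self hκ0.le hκ1.le hT.le i)
    rw [hxhat T, if_neg hT_notin]
    gcongr
    exact integral_le_integral_raise hlam.le hκ0.le hκ1.le hT.le hij hπ ha hmid hx hxhat hT.le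

/-- (Lemma 3, monotonization.) Raising a non-monotone stretch of a
bounded piecewise constant plan `x̄` (slots `[κ^m T, κ^{m-1} T)` with actions
`a_m ∈ [a^N, a^*]`) to the constant level `a_j` on `[κ^{j-1}T, κ^i T)` preserves the
SPE incentive constraint and weakly increases the expected payoff. -/
theorem stmt_8 (lam T k : ℝ) (hlam : 0 < lam) (hT : 0 < T) (hk : k ∈ Set.Ioo (0 : ℝ) 1)
    (κ : ℝ) (hκ : κ = 1 - k) (aN aStar : ℝ) (haa : aN ≤ aStar) (πN : ℝ)
    (π G L : ℝ → ℝ) (hL : ∀ a, L a = π a - πN)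
    (hπ : MonotoneOn π (Set.Icc aN aStar)) (hG : MonotoneOn G (Set.Icc aN aStar))
    (hLmono : MonotoneOn L (Set.Icc aN aStar))
    (a : ℕ → ℝ) (ha : ∀ m, 1 ≤ m → a m ∈ Set.Icc aN aStar)
    (xbar : ℝ → ℝ)
    (hxbar : ∀ m, 1 ≤ m → ∀ t ∈ Set.Ico (κ ^ m * T) (κ ^ (m - 1) * T), xbar t = a m)
    (hIC : ∀ t ∈ Set.Ioc (0 : ℝ) T,
      G (xbar t) * Real.exp (-lam * t)
        ≤ ∫ s in ((1 - k) * t)..t, L (xbar s) * lam * Real.exp (-lam * s))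
    (i j : ℕ) (hi : 1 ≤ i) (hij : i < j)
    (hmid : ∀ m, i < m → m < j → a m < a j) (hji : a j ≤ a i)
    (xhat : ℝ → ℝ)
    (hxhat : ∀ t, xhat t = if t ∈ Set.Ico (κ ^ (j - 1) * T) (κ ^ i * T) then a j else xbar t) :
    (∀ t ∈ Set.Ioc (0 : ℝ) T,
      G (xhat t) * Real.exp (-lam * t)
        ≤ ∫ s in ((1 - k) * t)..t, L (xhat s) * lam * Real.exp (-lam * s))
    ∧ π (xbar T) * Real.exp (-lam * T)
        + (∫ t in (0 : ℝ)..T, π (xbar t) * lam * Real.exp (-lam * t))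
      ≤ π (xhat T) * Real.exp (-lam * T)
        + ∫ t in (0 : ℝ)..T, π (xhat t) * lam * Real.exp (-lam * t) :=
  stmt_8_general lam T k hlam hT hk κ hκ aN aStar π G L hπ hG hLmono a ha xbar hxbar hIC i j hi hij
    hmid hji xhat hxhat
end
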